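/- For any θ, β ∈ ℝ^T, θᵀβ ≤ max(‖(θ)₊‖₂, ‖(−θ)₊‖₂) · (‖(β)₊‖₂ + ‖(−β)₊‖₂). In other words, the dual norm of the Cooperative-LASSO norm g(β) = ‖(β)₊‖₂ + ‖(−β)₊‖₂ is g*(θ) = max(‖(θ)₊‖₂, ‖(−θ)₊‖₂). -/
import Mathlib


open BigOperators

/-- componentwise positive part -/
def pPart {T : ℕ} (β : Fin T → ℝ) : Fin T → ℝ := fun t => max (β t) 0

/-- Euclidean norm -/
noncomputable def norm2 {T : ℕ} (β : Fin T → ℝ) : ℝ := Real.sqrt (∑ t, (β t) ^ 2)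

/-- the Cooperative-LASSO penalty -/
noncomputable def coop {T : ℕ} (β : Fin T → ℝ) : ℝ :=
  norm2 (pPart β) + norm2 (pPart (-β))

theorem norm2_nonneg {T : ℕ} (β : Fin T → ℝ) : 0 ≤ norm2 β := Real.sqrt_nonneg _

theorem sum_mul_le_norm2 {T : ℕ} (f g : Fin T → ℝ) :
    ∑ t, f t * g t ≤ norm2 f * norm2 g := by
  simpa [norm2] using Real.sum_mul_le_sqrt_mul_sqrt Finset.univ f g

/-- Dual-norm inequality: `θᵀβ ≤ max(‖(θ)₊‖₂, ‖(−θ)₊‖₂) · (‖(β)₊‖₂ + ‖(−β)₊‖₂)`,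
i.e. the dual norm of the Cooperative-LASSO norm is
`g*(θ) = max(‖(θ)₊‖₂, ‖(−θ)₊‖₂)`. -/
theorem coop_dual_norm_ineq (T : ℕ) (θ β : Fin T → ℝ) :
    ∑ t, θ t * β t ≤ max (norm2 (pPart θ)) (norm2 (pPart (-θ))) * coop β := by
  have key : ∀ t, θ t * β t ≤ pPart θ t * pPart β t + pPart (-θ) t * pPart (-β) t := by
    intro t
    simp only [pPart, Pi.neg_apply]
    rcases le_total (θ t) 0 with hθ | hθ <;> rcases le_total (β t) 0 with hβ | hβ <;>
      simp [max_eq_left, max_eq_right, hθ, hβ, neg_nonneg.2, *] <;> nlinarith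
  calc ∑ t, θ t * β t
      ≤ ∑ t, (pPart θ t * pPart β t + pPart (-θ) t * pPart (-β) t) :=
        Finset.sum_le_sum fun t _ => key t
    _ = (∑ t, pPart θ t * pPart β t) + ∑ t, pPart (-θ) t * pPart (-β) t :=
        Finset.sum_add_distrib
    _ ≤ norm2 (pPart θ) * norm2 (pPart β) + norm2 (pPart (-θ)) * norm2 (pPart (-β)) :=
        add_le_add (sum_mul_le_norm2 _ _) (sum_mul_le_norm2 _ _)
    _ ≤ max (norm2 (pPart θ)) (norm2 (pPart (-θ))) * norm2 (pPart β) +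
        max (norm2 (pPart θ)) (norm2 (pPart (-θ))) * norm2 (pPart (-β)) :=
        add_le_add
          (mul_le_mul_of_nonneg_right (le_max_left _ _) (norm2_nonneg _))
          (mul_le_mul_of_nonneg_right (le_max_right _ _) (norm2_nonneg _))
    _ = max (norm2 (pPart θ)) (norm2 (pPart (-θ))) * coop β := by
        rw [coop, mul_add]
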